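/- Let V and W be subspaces of ℝ^n with orthogonal projections P_V and P_W. Define θ(v, V) as the angle between a nonzero vector v and the subspace V. Then for any nonzero v with P_V v ≠ 0, θ(v, W) ≤ θ(v, V) + θ(P_V v, W). -/

import Mathlib

/-!
The orthogonal projection `P_K v` is the vector of `K` making the smallest angle with `v`, and that
angle is `θ(v, K)`. Hence, with `u = P_V v`,
`θ(v, W) ≤ ∠(v, P_W u) ≤ ∠(v, u) + ∠(u, P_W u) = θ(v, V) + θ(u, W)`
by the triangle inequality for angles between vectors.
-/

open InnerProductGeometry Real

/-- The angle between a nonzero vector `v` and a subspace `V`,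
defined as `arccos (‖P_V v‖ / ‖v‖)`. -/
noncomputable def angleToSubspace {n : ℕ}
    (V : Submodule ℝ (EuclideanSpace ℝ (Fin n)))
    (v : EuclideanSpace ℝ (Fin n)) : ℝ :=
  Real.arccos (‖((Submodule.orthogonalProjectionOnto V v : V) : EuclideanSpace ℝ (Fin n))‖ / ‖v‖)

namespace Submodule

variable {E : Type*} [NormedAddCommGroup E] [InnerProductSpace ℝ E]
  (K : Submodule ℝ E) [K.HasOrthogonalProjection]

theorem real_inner_self_starProjection (v : E) :
    inner ℝ v (K.starProjection v) = ‖K.starProjection v‖ ^ 2 := by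
  have h := K.starProjection_inner_eq_zero v _ (K.starProjection_apply_mem v)
  rw [inner_sub_left, sub_eq_zero] at h
  rw [h, real_inner_self_eq_norm_sq]

theorem angle_starProjection (v : E) :
    angle v (K.starProjection v) = arccos (‖K.starProjection v‖ / ‖v‖) := by
  rw [angle, real_inner_self_starProjection]
  rcases eq_or_ne (K.starProjection v) 0 with h | h
  · simp [h]
  · rw [sq, mul_comm ‖v‖, ← div_div, mul_div_cancel_right₀ _ (norm_ne_zero_iff.mpr h)]

variable {K} in
theorem angle_starProjection_le {v w : E} (hw : w ∈ K) :
    angle v (K.starProjection v) ≤ angle v w := by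
  rw [angle_starProjection]
  rcases eq_or_ne w 0 with rfl | hw0
  · rw [angle_zero_right, arccos_le_pi_div_two]
    positivity
  rw [angle]
  apply arccos_le_arccos
  calc inner ℝ v w / (‖v‖ * ‖w‖) = inner ℝ (K.starProjection v) w / (‖v‖ * ‖w‖) := by
        rw [K.inner_starProjection_left_eq_right, K.starProjection_eq_self_iff.mpr hw]
    _ ≤ ‖K.starProjection v‖ * ‖w‖ / (‖v‖ * ‖w‖) := by
        gcongr
        exact real_inner_le_norm _ _
    _ = ‖K.starProjection v‖ / ‖v‖ := mul_div_mul_right _ _ (norm_ne_zero_iff.mpr hw0)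

end Submodule

theorem angleToSubspace_eq_angle {n : ℕ} (V : Submodule ℝ (EuclideanSpace ℝ (Fin n)))
    (v : EuclideanSpace ℝ (Fin n)) : angleToSubspace V v = angle v (V.starProjection v) :=
  (V.angle_starProjection v).symm

theorem angleToSubspace_le_add_general (n : ℕ)
    (V W : Submodule ℝ (EuclideanSpace ℝ (Fin n)))
    (v : EuclideanSpace ℝ (Fin n)) :
    angleToSubspace W v ≤
      angleToSubspace V v +
        angleToSubspace W ((Submodule.orthogonalProjectionOnto V v : V) : EuclideanSpace ℝ (Fin n)) := by
  simp only [angleToSubspace_eq_angle]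
  set u := V.starProjection v
  calc angle v (W.starProjection v) ≤ angle v (W.starProjection u) :=
        Submodule.angle_starProjection_le (W.starProjection_apply_mem u)
    _ ≤ angle v u + angle u (W.starProjection u) := angle_le_angle_add_angle v _ _

/-- Lower-bound half of the perturbation angle theorem (Theorem 2 of the paper,
rearranged): `θ̂ ≤ θ + θ₁*`, i.e. for subspaces `V, W` of `ℝⁿ` and any nonzero `v`
with `P_V v ≠ 0`, `θ(v, W) ≤ θ(v, V) + θ(P_V v, W)`. -/
theorem angleToSubspace_le_add (n : ℕ)
    (V W : Submodule ℝ (EuclideanSpace ℝ (Fin n)))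
    (v : EuclideanSpace ℝ (Fin n)) (hv : v ≠ 0)
    (hPv : ((Submodule.orthogonalProjectionOnto V v : V) : EuclideanSpace ℝ (Fin n)) ≠ 0) :
    angleToSubspace W v ≤
      angleToSubspace V v +
        angleToSubspace W ((Submodule.orthogonalProjectionOnto V v : V) : EuclideanSpace ℝ (Fin n)) :=
  angleToSubspace_le_add_general n V W v
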